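/- arXiv:2306.01659 — 3 statements merged into one kernel-verified Lean document; each statement's English description precedes it below -/
import Mathlib

section
/- Suppose (z, w) solve the diagonal system z_t + λ₁ z_x = 0, w_t + λ₂ w_x = 0 classically on (0,1)×(0,T), where λ₁, λ₂ are continuous functions of (z, w). If -M ≤ z(x,0) and w(x,0) ≤ M for all x, and the boundary trace conditions are never active (strict inequalities at x = 0, 1), and whenever z = -M at an interior minimum point the right-hand side forcing is zero, then the region {-M ≤ z, w ≤ M} is invariant: -M ≤ z(x,t), w(x,t) ≤ M for all t ∈ [0,T]. -/
/-!
Perturb `u` to `u + ε t` with `ε > 0`. If the perturbed function dropped below `m`, its minimum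
over `[a, b] × [0, t]` would be attained neither at time `0` nor on the lateral boundary, hence at
an interior point in space and a positive time. There the spatial derivative of `u` vanishes and
its time derivative is at most `-ε`, contradicting `u_t + c u_x ≥ 0`. Letting `ε → 0` and then
`t → T` gives `m ≤ u`; apply this to `z` and to `-w`.
-/

open Set Filter Topology

lemma deriv_nonpos_of_isMinOn_Icc {g : ℝ → ℝ} {a t : ℝ} (hat : a < t)
    (hg : DifferentiableAt ℝ g t) (hmin : IsMinOn g (Icc a t) t) : deriv g t ≤ 0 := by
  have hslope : Tendsto (slope g t) (𝓝[<] t) (𝓝 (deriv g t)) :=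
    (hasDerivAt_iff_tendsto_slope.1 hg.hasDerivAt).mono_left
      (nhdsWithin_mono _ fun s hs => ne_of_lt hs)
  refine le_of_tendsto hslope ?_
  filter_upwards [Ioo_mem_nhdsLT hat] with s hs
  rw [slope_def_field]
  exact div_nonpos_of_nonneg_of_nonpos (sub_nonneg.2 (hmin ⟨hs.1.le, hs.2.le⟩))
    (by linarith [hs.2])

section Transport

variable {a b T m : ℝ} {u : ℝ → ℝ → ℝ}

lemma nonpos_of_isMinOn_add_mul_snd {c ε x₀ t₀ : ℝ} (hx₀ : x₀ ∈ Ioo a b)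
    (ht₀ : 0 < t₀) (hut : DifferentiableAt ℝ (fun t => u x₀ t) t₀)
    (hsuper : 0 ≤ deriv (fun t => u x₀ t) t₀ + c * deriv (fun x => u x t₀) x₀)
    (hmin : IsMinOn (fun p : ℝ × ℝ => u p.1 p.2 + ε * p.2) (Icc a b ×ˢ Icc 0 t₀)
      (x₀, t₀)) :
    ε ≤ 0 := by
  have hux : deriv (fun x => u x t₀) x₀ = 0 := by
    have hloc : IsLocalMin (fun x => u x t₀ + ε * t₀) x₀ :=
      IsMinOn.isLocalMin (s := Icc a b) (isMinOn_iff.2 fun x hx => isMinOn_iff.1 hmin (x, t₀)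
        ⟨hx, ht₀.le, le_rfl⟩) (Icc_mem_nhds hx₀.1 hx₀.2)
    simpa only [deriv_add_const] using hloc.deriv_eq_zero
  have hut' : deriv (fun t => u x₀ t) t₀ + ε ≤ 0 := by
    have hε : HasDerivAt (fun t => ε * t) ε t₀ := by
      simpa using (hasDerivAt_id t₀).const_mul ε
    have hneg := deriv_nonpos_of_isMinOn_Icc (g := fun t => u x₀ t + ε * t) ht₀
      (hut.fun_add hε.differentiableAt)
      (isMinOn_iff.2 fun t ht => isMinOn_iff.1 hmin (x₀, t) ⟨Ioo_subset_Icc_self hx₀, ht⟩)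
    rwa [deriv_fun_add hut hε.differentiableAt, hε.deriv] at hneg
  rw [hux, mul_zero, add_zero] at hsuper
  linarith

lemma le_add_mul_of_transport_supersolution {c : ℝ → ℝ → ℝ} {ε : ℝ} (hε : 0 < ε)
    (hu : ContinuousOn (fun p : ℝ × ℝ => u p.1 p.2) (Icc a b ×ˢ Icc 0 T))
    (hut : ∀ x ∈ Ioo a b, ∀ t ∈ Ioo 0 T, DifferentiableAt ℝ (fun t' => u x t') t)
    (hsuper : ∀ x ∈ Ioo a b, ∀ t ∈ Ioo 0 T,
      0 ≤ deriv (fun t' => u x t') t + c x t * deriv (fun x' => u x' t) x)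
    (hinit : ∀ x ∈ Icc a b, m ≤ u x 0)
    (hleft : ∀ t ∈ Ioo 0 T, m < u a t) (hright : ∀ t ∈ Ioo 0 T, m < u b t) :
    ∀ x ∈ Icc a b, ∀ t ∈ Ico 0 T, m ≤ u x t + ε * t := by
  intro x hx t ht
  have hK : IsCompact (Icc a b ×ˢ Icc 0 t) := isCompact_Icc.prod isCompact_Icc
  obtain ⟨⟨x₀, t₀⟩, ⟨hx₀, ht₀⟩, hmin⟩ := hK.exists_isMinOn
    (f := fun p : ℝ × ℝ => u p.1 p.2 + ε * p.2) ⟨(x, t), hx, ht.1, le_rfl⟩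
    ((hu.mono (prod_mono_right (Icc_subset_Icc_right ht.2.le))).add
      (continuous_const.mul continuous_snd).continuousOn)
  refine le_trans ?_ (isMinOn_iff.1 hmin (x, t) ⟨hx, ht.1, le_rfl⟩)
  by_contra! hlt
  have hu₀ : u x₀ t₀ < m := by nlinarith [mul_nonneg hε.le ht₀.1]
  have ht₀pos : 0 < t₀ := ht₀.1.lt_of_ne (by rintro rfl; linarith [hinit x₀ hx₀])
  have ht₀T : t₀ ∈ Ioo 0 T := ⟨ht₀pos, ht₀.2.trans_lt ht.2⟩
  have hx₀int : x₀ ∈ Ioo a b :=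
    ⟨hx₀.1.lt_of_ne (by rintro rfl; linarith [hleft t₀ ht₀T]),
      hx₀.2.lt_of_ne (by rintro rfl; linarith [hright t₀ ht₀T])⟩
  exact hε.not_ge <| nonpos_of_isMinOn_add_mul_snd hx₀int ht₀pos
    (hut x₀ hx₀int t₀ ht₀T) (hsuper x₀ hx₀int t₀ ht₀T)
    (hmin.on_subset (prod_mono_right (Icc_subset_Icc_right ht₀.2)))

theorem transport_supersolution_ge {c : ℝ → ℝ → ℝ} (hT : 0 < T)
    (hu : ContinuousOn (fun p : ℝ × ℝ => u p.1 p.2) (Icc a b ×ˢ Icc 0 T))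
    (hut : ∀ x ∈ Ioo a b, ∀ t ∈ Ioo 0 T, DifferentiableAt ℝ (fun t' => u x t') t)
    (hsuper : ∀ x ∈ Ioo a b, ∀ t ∈ Ioo 0 T,
      0 ≤ deriv (fun t' => u x t') t + c x t * deriv (fun x' => u x' t) x)
    (hinit : ∀ x ∈ Icc a b, m ≤ u x 0)
    (hleft : ∀ t ∈ Ioo 0 T, m < u a t) (hright : ∀ t ∈ Ioo 0 T, m < u b t) :
    ∀ x ∈ Icc a b, ∀ t ∈ Icc 0 T, m ≤ u x t := by
  intro x hx
  have hIco : ∀ t ∈ Ico 0 T, m ≤ u x t := fun t ht => le_of_forall_pos_le_add fun δ hδ => by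
    have ht1 : 0 < t + 1 := by linarith [ht.1]
    have hpen := le_add_mul_of_transport_supersolution (div_pos hδ ht1) hu hut hsuper hinit
      hleft hright x hx t ht
    have hsmall : δ / (t + 1) * t ≤ δ := by
      rw [div_mul_eq_mul_div, div_le_iff₀ ht1]
      nlinarith
    linarith
  rw [← closure_Ico hT.ne]
  refine le_on_closure hIco continuousOn_const ?_
  rw [closure_Ico hT.ne]
  exact hu.comp (f := fun t => (x, t)) (by fun_prop) fun t ht => ⟨hx, ht⟩

theorem transport_subsolution_le {c : ℝ → ℝ → ℝ} {M : ℝ} (hT : 0 < T)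
    (hu : ContinuousOn (fun p : ℝ × ℝ => u p.1 p.2) (Icc a b ×ˢ Icc 0 T))
    (hut : ∀ x ∈ Ioo a b, ∀ t ∈ Ioo 0 T, DifferentiableAt ℝ (fun t' => u x t') t)
    (hsub : ∀ x ∈ Ioo a b, ∀ t ∈ Ioo 0 T,
      deriv (fun t' => u x t') t + c x t * deriv (fun x' => u x' t) x ≤ 0)
    (hinit : ∀ x ∈ Icc a b, u x 0 ≤ M)
    (hleft : ∀ t ∈ Ioo 0 T, u a t < M) (hright : ∀ t ∈ Ioo 0 T, u b t < M) :
    ∀ x ∈ Icc a b, ∀ t ∈ Icc 0 T, u x t ≤ M := by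
  have hneg := transport_supersolution_ge (u := fun x t => -u x t) (m := -M) (c := c) hT hu.neg
    (fun x hx t ht => (hut x hx t ht).neg)
    (fun x hx t ht => by simp only [deriv.fun_neg]; linarith [hsub x hx t ht])
    (fun x hx => neg_le_neg (hinit x hx))
    (fun t ht => neg_lt_neg (hleft t ht)) (fun t ht => neg_lt_neg (hright t ht))
  exact fun x hx t ht => neg_le_neg_iff.1 (hneg x hx t ht)

end Transport

theorem invariant_region_diagonal_system_general
    (T M : ℝ) (hT : 0 < T)
    (z w : ℝ → ℝ → ℝ)  -- z x t, w x t
    (Λ₁ Λ₂ : ℝ × ℝ → ℝ)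
    -- smoothness of the classical solution
    (hzx : ∀ x ∈ Set.Ioo (0:ℝ) 1, ∀ t ∈ Set.Ioo (0:ℝ) T,
      DifferentiableAt ℝ (fun x' => z x' t) x ∧ DifferentiableAt ℝ (fun t' => z x t') t)
    (hwx : ∀ x ∈ Set.Ioo (0:ℝ) 1, ∀ t ∈ Set.Ioo (0:ℝ) T,
      DifferentiableAt ℝ (fun x' => w x' t) x ∧ DifferentiableAt ℝ (fun t' => w x t') t)
    (hcont : ContinuousOn (fun p : ℝ × ℝ => (z p.1 p.2, w p.1 p.2))
      (Set.Icc 0 1 ×ˢ Set.Icc 0 T))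
    -- the diagonal homogeneous system (zero right-hand side forcing)
    (hpdez : ∀ x ∈ Set.Ioo (0:ℝ) 1, ∀ t ∈ Set.Ioo (0:ℝ) T,
      deriv (fun t' => z x t') t + Λ₁ (z x t, w x t) * deriv (fun x' => z x' t) x = 0)
    (hpdew : ∀ x ∈ Set.Ioo (0:ℝ) 1, ∀ t ∈ Set.Ioo (0:ℝ) T,
      deriv (fun t' => w x t') t + Λ₂ (z x t, w x t) * deriv (fun x' => w x' t) x = 0)
    -- initial bounds
    (hinit : ∀ x ∈ Set.Icc (0:ℝ) 1, -M ≤ z x 0 ∧ w x 0 ≤ M)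
    -- the boundary traces are never active (strict inequalities at x = 0, 1)
    (hbdry : ∀ t ∈ Set.Icc (0:ℝ) T,
      -M < z 0 t ∧ w 0 t < M ∧ -M < z 1 t ∧ w 1 t < M) :
    ∀ x ∈ Set.Icc (0:ℝ) 1, ∀ t ∈ Set.Icc (0:ℝ) T, -M ≤ z x t ∧ w x t ≤ M := by
  have hbdry' : ∀ t ∈ Ioo 0 T, -M < z 0 t ∧ w 0 t < M ∧ -M < z 1 t ∧ w 1 t < M :=
    fun t ht => hbdry t (Ioo_subset_Icc_self ht)
  have hz := transport_supersolution_ge hT (continuous_fst.comp_continuousOn hcont)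
    (fun x hx t ht => (hzx x hx t ht).2) (fun x hx t ht => (hpdez x hx t ht).ge)
    (fun x hx => (hinit x hx).1) (fun t ht => (hbdry' t ht).1) (fun t ht => (hbdry' t ht).2.2.1)
  have hw := transport_subsolution_le hT (continuous_snd.comp_continuousOn hcont)
    (fun x hx t ht => (hwx x hx t ht).2) (fun x hx t ht => (hpdew x hx t ht).le)
    (fun x hx => (hinit x hx).2) (fun t ht => (hbdry' t ht).2.1) (fun t ht => (hbdry' t ht).2.2.2)
  exact fun x hx t ht => ⟨hz x hx t ht, hw x hx t ht⟩

/-- Invariant region for the diagonal system of Riemann invariants: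
`z_t + λ₁ z_x = 0`, `w_t + λ₂ w_x = 0` on `(0,1) × (0,T)`. -/
theorem invariant_region_diagonal_system
    (T M : ℝ) (hT : 0 < T) (hM : 0 < M)
    (z w : ℝ → ℝ → ℝ)  -- z x t, w x t
    (Λ₁ Λ₂ : ℝ × ℝ → ℝ) (hΛ₁ : Continuous Λ₁) (hΛ₂ : Continuous Λ₂)
    -- smoothness of the classical solution
    (hzx : ∀ x ∈ Set.Ioo (0:ℝ) 1, ∀ t ∈ Set.Ioo (0:ℝ) T,
      DifferentiableAt ℝ (fun x' => z x' t) x ∧ DifferentiableAt ℝ (fun t' => z x t') t)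
    (hwx : ∀ x ∈ Set.Ioo (0:ℝ) 1, ∀ t ∈ Set.Ioo (0:ℝ) T,
      DifferentiableAt ℝ (fun x' => w x' t) x ∧ DifferentiableAt ℝ (fun t' => w x t') t)
    (hcont : ContinuousOn (fun p : ℝ × ℝ => (z p.1 p.2, w p.1 p.2))
      (Set.Icc 0 1 ×ˢ Set.Icc 0 T))
    -- the diagonal homogeneous system (zero right-hand side forcing)
    (hpdez : ∀ x ∈ Set.Ioo (0:ℝ) 1, ∀ t ∈ Set.Ioo (0:ℝ) T,
      deriv (fun t' => z x t') t + Λ₁ (z x t, w x t) * deriv (fun x' => z x' t) x = 0)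
    (hpdew : ∀ x ∈ Set.Ioo (0:ℝ) 1, ∀ t ∈ Set.Ioo (0:ℝ) T,
      deriv (fun t' => w x t') t + Λ₂ (z x t, w x t) * deriv (fun x' => w x' t) x = 0)
    -- initial bounds
    (hinit : ∀ x ∈ Set.Icc (0:ℝ) 1, -M ≤ z x 0 ∧ w x 0 ≤ M)
    -- the boundary traces are never active (strict inequalities at x = 0, 1)
    (hbdry : ∀ t ∈ Set.Icc (0:ℝ) T,
      -M < z 0 t ∧ w 0 t < M ∧ -M < z 1 t ∧ w 1 t < M) :
    ∀ x ∈ Set.Icc (0:ℝ) 1, ∀ t ∈ Set.Icc (0:ℝ) T, -M ≤ z x t ∧ w x t ≤ M :=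
  invariant_region_diagonal_system_general T M hT z w Λ₁ Λ₂ hzx hwx hcont hpdez hpdew hinit hbdry
end

section
/- For γ > 1, θ = (γ-1)/2, and a left state u₋ = (ρ₋, ρ₋v₋) with ρ₋ > 0 and v₋ ≥ 0, there exists a state u₊ = (ρ₊, 0) with ρ₊ ≥ ρ₋ connected to u₋ by a 1-shock: i.e., there exist ρ₊ ≥ ρ₋ and shock speed σ such that the Rankine–Hugoniot conditions m₊ - m₋ = σ(ρ₊ - ρ₋) and (m₊²/ρ₊ + p(ρ₊)) - (m₋²/ρ₋ + p(ρ₋)) = σ(m₊ - m₋) hold with m₊ = 0, m₋ = ρ₋v₋, and p(ρ) = ρ^γ/γ. -/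
/-!
Eliminating the shock speed `σ = -ρ₋v₋ / (ρ₊ - ρ₋)` from the Rankine–Hugoniot conditions with
`m₊ = 0` leaves one scalar equation for `ρ₊`, namely `H ρ₊ = 0` with
`H ρ = (ρ - ρ₋)(p ρ - p ρ₋) - ρ₋ v₋² ρ`. Now `H ρ₋ = -(ρ₋v₋)² ≤ 0` and `H ρ → ∞` as soon as
`p ρ → ∞`, so the intermediate value theorem on `[ρ₋, ∞)` gives a root `ρ₊ ≥ ρ₋`.
-/

open Filter Set

/-- The paper's `v₋ = √((ρ₊ - ρ₋)(p ρ₊ - p ρ₋) / (ρ₊ρ₋))` with denominators cleared. -/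
def restHugoniot (p : ℝ → ℝ) (ρL vL ρ : ℝ) : ℝ :=
  (ρ - ρL) * (p ρ - p ρL) - ρL * vL ^ 2 * ρ

section

variable {p : ℝ → ℝ} {ρL vL : ℝ}

theorem restHugoniot_self : restHugoniot p ρL vL ρL = -(ρL * vL) ^ 2 := by
  unfold restHugoniot; ring

theorem continuousOn_restHugoniot (hp : ContinuousOn p (Ici ρL)) :
    ContinuousOn (restHugoniot p ρL vL) (Ici ρL) := by
  unfold restHugoniot
  fun_prop

theorem tendsto_restHugoniot_atTop (hp : Tendsto p atTop atTop) :
    Tendsto (restHugoniot p ρL vL) atTop atTop := by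
  have hfactor : restHugoniot p ρL vL =
      fun ρ => (ρ - ρL) * (p ρ - (p ρL + ρL * vL ^ 2)) - ρL ^ 2 * vL ^ 2 := by
    funext ρ; unfold restHugoniot; ring
  rw [hfactor]
  exact tendsto_atTop_add_const_right _ _ <|
    (tendsto_atTop_add_const_right _ _ tendsto_id).atTop_mul_atTop₀
      (tendsto_atTop_add_const_right _ _ hp)

theorem exists_restHugoniot_eq_zero (hp_cont : ContinuousOn p (Ici ρL))
    (hp_top : Tendsto p atTop atTop) : ∃ ρR, ρL ≤ ρR ∧ restHugoniot p ρL vL ρR = 0 := by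
  have hzero : (0 : ℝ) ∈ Ici (restHugoniot p ρL vL ρL) := by
    rw [restHugoniot_self, mem_Ici, neg_nonpos]
    positivity
  exact intermediate_value_Ici (continuousOn_restHugoniot hp_cont)
    (tendsto_restHugoniot_atTop hp_top) hzero

theorem exists_shockSpeed_of_restHugoniot_eq_zero {ρR : ℝ} (hρL : ρL ≠ 0)
    (hH : restHugoniot p ρL vL ρR = 0) :
    ∃ σ : ℝ, (0 : ℝ) - ρL * vL = σ * (ρR - ρL) ∧
      ((0 : ℝ) ^ 2 / ρR + p ρR) - ((ρL * vL) ^ 2 / ρL + p ρL) = σ * (0 - ρL * vL) := by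
  have hflux : (ρL * vL) ^ 2 / ρL = ρL * vL ^ 2 := by field_simp
  rcases eq_or_ne ρR ρL with rfl | hne
  · have hvL : vL = 0 := by
      rw [restHugoniot_self, neg_eq_zero] at hH
      simpa [hρL] using hH
    exact ⟨0, by simp [hvL], by simp [hvL]⟩
  · have hgap : ρR - ρL ≠ 0 := sub_ne_zero.mpr hne
    refine ⟨-(ρL * vL) / (ρR - ρL), by field_simp; ring, ?_⟩
    unfold restHugoniot at hH
    rw [hflux]
    field_simp
    linear_combination hH

end

theorem one_shock_to_rest_state_general
    (γ : ℝ) (hγ : 1 < γ)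
    (p : ℝ → ℝ) (hp : ∀ ρ : ℝ, p ρ = ρ ^ γ / γ)
    (ρL vL : ℝ) (hρL : 0 < ρL) :
    ∃ ρR σ : ℝ, ρL ≤ ρR ∧
      (0 : ℝ) - ρL * vL = σ * (ρR - ρL) ∧
      ((0 : ℝ) ^ 2 / ρR + p ρR) - ((ρL * vL) ^ 2 / ρL + p ρL) = σ * (0 - ρL * vL) := by
  have hγ0 : 0 < γ := by linarith
  obtain rfl : p = fun ρ => ρ ^ γ / γ := funext hp
  have hp_cont : ContinuousOn (fun ρ : ℝ => ρ ^ γ / γ) (Ici ρL) :=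
    ((Real.continuous_rpow_const hγ0.le).div_const γ).continuousOn
  have hp_top : Tendsto (fun ρ : ℝ => ρ ^ γ / γ) atTop atTop :=
    (tendsto_rpow_atTop hγ0).atTop_div_const hγ0
  obtain ⟨ρR, hρR, hH⟩ := exists_restHugoniot_eq_zero (vL := vL) hp_cont hp_top
  obtain ⟨σ, hmass, hmomentum⟩ := exists_shockSpeed_of_restHugoniot_eq_zero hρL.ne' hH
  exact ⟨ρR, σ, hρR, hmass, hmomentum⟩

theorem one_shock_to_rest_state
    (γ : ℝ) (hγ : 1 < γ)
    (p : ℝ → ℝ) (hp : ∀ ρ : ℝ, p ρ = ρ ^ γ / γ)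
    (ρL vL : ℝ) (hρL : 0 < ρL) (hvL : 0 ≤ vL) :
    ∃ ρR σ : ℝ, ρL ≤ ρR ∧
      (0 : ℝ) - ρL * vL = σ * (ρR - ρL) ∧
      ((0 : ℝ) ^ 2 / ρR + p ρR) - ((ρL * vL) ^ 2 / ρL + p ρL) = σ * (0 - ρL * vL) :=
  one_shock_to_rest_state_general γ hγ p hp ρL vL hρL
end

section
/- For γ > 1 and ρ₀ > 0, the function S(ρ, ρ₀) = sqrt(ρ(p(ρ) - p(ρ₀))/(ρ₀(ρ - ρ₀))) for ρ ≠ ρ₀, S(ρ₀, ρ₀) = sqrt(p'(ρ₀)), with p(ρ) = ρ^γ/γ, is continuous in ρ on (0, ∞), and S(ρ, ρ₀) ≥ 0 with S strictly increasing in ρ for ρ ≥ ρ₀. -/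
theorem shock_speed_function_properties
    (γ ρ₀ : ℝ) (hγ : 1 < γ) (hρ₀ : 0 < ρ₀)
    (p : ℝ → ℝ) (hp : ∀ ρ : ℝ, p ρ = ρ ^ γ / γ)
    (S : ℝ → ℝ)
    (hS : ∀ ρ : ℝ, S ρ = if ρ = ρ₀ then Real.sqrt (ρ₀ ^ (γ - 1))
      else Real.sqrt (ρ * (p ρ - p ρ₀) / (ρ₀ * (ρ - ρ₀)))) :
    ContinuousOn S (Set.Ioi 0) ∧
    (∀ ρ : ℝ, 0 < ρ → 0 ≤ S ρ) ∧
    StrictMonoOn S (Set.Ici ρ₀) := by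
  have hγ0 : (0:ℝ) < γ := lt_trans one_pos hγ
  have hγ0' : γ ≠ 0 := ne_of_gt hγ0
  have hρ0' : ρ₀ ≠ 0 := ne_of_gt hρ₀
  set q : ℝ → ℝ := fun x => x * (x ^ γ - ρ₀ ^ γ) / (γ * ρ₀ * (x - ρ₀)) with hqdef
  set g : ℝ → ℝ := fun x => if x = ρ₀ then ρ₀ ^ (γ - 1) else q x with hgdef
  -- S = sqrt ∘ g
  have hSg : ∀ x, S x = Real.sqrt (g x) := by
    intro x
    rw [hS]
    by_cases h : x = ρ₀
    · simp [hgdef, h]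
    · simp only [hgdef, hqdef, if_neg h]
      congr 1
      rw [hp, hp]
      field_simp
  have hgρval : g ρ₀ = ρ₀ ^ (γ - 1) := by simp [hgdef]
  -- x^γ = x^(γ-1) * x
  have hsplit : ∀ x : ℝ, x ≠ 0 → x ^ γ = x ^ (γ - 1) * x := by
    intro x hx
    conv_lhs => rw [show γ = (γ - 1) + 1 by ring]
    rw [Real.rpow_add_one hx]
  -- continuity of q away from ρ₀
  have hqc : ∀ x : ℝ, x ≠ 0 → x ≠ ρ₀ → ContinuousAt q x := by
    intro x hx0 hxρ
    apply ContinuousAt.div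
    · exact continuousAt_id.mul
        ((Real.continuousAt_rpow_const x γ (Or.inl hx0)).sub continuousAt_const)
    · exact continuousAt_const.mul (continuousAt_id.sub continuousAt_const)
    · exact mul_ne_zero (mul_ne_zero hγ0' hρ0') (sub_ne_zero.mpr hxρ)
  -- g eventually equals q near x ≠ ρ₀
  have hgq : ∀ x : ℝ, x ≠ ρ₀ → q =ᶠ[nhds x] g := by
    intro x hx
    filter_upwards [isOpen_compl_singleton.mem_nhds hx] with t ht
    exact (if_neg ht).symm
  -- continuity of g at ρ₀
  have hpd : HasDerivAt (fun t : ℝ => t ^ γ / γ) (ρ₀ ^ (γ - 1)) ρ₀ := by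
    have h := (Real.hasDerivAt_rpow_const (p := γ) (x := ρ₀) (Or.inl hρ0')).div_const γ
    simpa [mul_div_assoc, mul_div_cancel_left₀ _ hγ0'] using h
  have hslope := hasDerivAt_iff_tendsto_slope.mp hpd
  have hratio : Filter.Tendsto (fun x : ℝ => x / ρ₀) (nhdsWithin ρ₀ {ρ₀}ᶜ) (nhds 1) := by
    have h : Filter.Tendsto (fun x : ℝ => x / ρ₀) (nhds ρ₀) (nhds (ρ₀ / ρ₀)) :=
      continuousAt_id.div_const ρ₀
    rw [div_self hρ0'] at h
    exact h.mono_left nhdsWithin_le_nhds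
  have hgl : Filter.Tendsto g (nhdsWithin ρ₀ {ρ₀}ᶜ) (nhds (ρ₀ ^ (γ - 1))) := by
    have hG := hratio.mul hslope
    rw [one_mul] at hG
    apply hG.congr'
    filter_upwards [self_mem_nhdsWithin] with x hx
    have hxρ : x ≠ ρ₀ := hx
    rw [hgdef]
    simp only [if_neg hxρ, hqdef, slope_def_field]
    rw [eq_div_iff (mul_ne_zero (mul_ne_zero hγ0' hρ0') (sub_ne_zero.mpr hxρ))]
    field_simp [sub_ne_zero.mpr hxρ]
  have hgρ : ContinuousAt g ρ₀ := by
    unfold ContinuousAt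
    rw [hgρval, ← nhdsNE_sup_pure ρ₀, Filter.tendsto_sup]
    exact ⟨hgl, hgρval ▸ tendsto_pure_nhds g ρ₀⟩
  -- continuity of g on Ioi 0
  have hgcont : ContinuousOn g (Set.Ioi 0) := by
    intro x hx
    by_cases h : x = ρ₀
    · exact (h ▸ hgρ).continuousWithinAt
    · exact ((hqc x (ne_of_gt hx) h).congr (hgq x h)).continuousWithinAt
  have hScont : ContinuousOn S (Set.Ioi 0) := by
    have h : ContinuousOn (fun x => Real.sqrt (g x)) (Set.Ioi 0) :=
      Real.continuous_sqrt.comp_continuousOn hgcont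
    exact h.congr fun x _ => hSg x
  -- ψ positivity
  have hψpos : ∀ x : ℝ, ρ₀ < x →
      0 < γ * (x * x ^ γ) - (γ + 1) * (ρ₀ * x ^ γ) + ρ₀ * ρ₀ ^ γ := by
    set ψ : ℝ → ℝ := fun x => γ * (x * x ^ γ) - (γ + 1) * (ρ₀ * x ^ γ) + ρ₀ * ρ₀ ^ γ with hψdef
    have hψcont : ContinuousOn ψ (Set.Ici ρ₀) := by
      intro x hx
      have hx0 : (0:ℝ) < x := lt_of_lt_of_le hρ₀ hx
      have hr := Real.continuousAt_rpow_const x γ (Or.inl (ne_of_gt hx0))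
      exact (((continuousAt_const.mul (continuousAt_id.mul hr)).sub
        (continuousAt_const.mul (continuousAt_const.mul hr))).add
        continuousAt_const).continuousWithinAt
    have hψderiv : ∀ x ∈ interior (Set.Ici ρ₀), 0 < deriv ψ x := by
      intro x hx
      rw [interior_Ici] at hx
      have hx0 : (0:ℝ) < x := lt_trans hρ₀ hx
      have hr : HasDerivAt (fun t : ℝ => t ^ γ) (γ * x ^ (γ - 1)) x :=
        Real.hasDerivAt_rpow_const (Or.inl (ne_of_gt hx0))
      have h1 : HasDerivAt (fun t : ℝ => t * t ^ γ)
          (1 * x ^ γ + x * (γ * x ^ (γ - 1))) x := (hasDerivAt_id x).mul hr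
      have hd : HasDerivAt ψ
          (γ * (1 * x ^ γ + x * (γ * x ^ (γ - 1))) - (γ + 1) * (ρ₀ * (γ * x ^ (γ - 1)))) x :=
        ((h1.const_mul γ).sub ((hr.const_mul ρ₀).const_mul (γ + 1))).add_const _
      rw [hd.deriv]
      have hA : 0 < x ^ (γ - 1) := Real.rpow_pos_of_pos hx0 _
      rw [hsplit x (ne_of_gt hx0)]
      nlinarith [mul_pos hA (sub_pos.mpr hx), mul_pos hγ0 (mul_pos hA (sub_pos.mpr hx))]
    have hψmono : StrictMonoOn ψ (Set.Ici ρ₀) :=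
      strictMonoOn_of_deriv_pos (convex_Ici ρ₀) hψcont hψderiv
    intro x hx
    have h := hψmono (Set.self_mem_Ici) (Set.mem_Ici.mpr (le_of_lt hx)) hx
    have hψρ : ψ ρ₀ = 0 := by simp only [hψdef]; ring
    rw [hψρ] at h
    exact h
  -- derivative of g on Ioi ρ₀ is positive
  have hgderiv : ∀ x ∈ interior (Set.Ici ρ₀), 0 < deriv g x := by
    intro x hx
    rw [interior_Ici] at hx
    have hx0 : (0:ℝ) < x := lt_trans hρ₀ hx
    have hxρ : x ≠ ρ₀ := ne_of_gt hx
    have hr : HasDerivAt (fun t : ℝ => t ^ γ) (γ * x ^ (γ - 1)) x :=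
      Real.hasDerivAt_rpow_const (Or.inl (ne_of_gt hx0))
    have hn : HasDerivAt (fun t : ℝ => t * (t ^ γ - ρ₀ ^ γ))
        (1 * (x ^ γ - ρ₀ ^ γ) + x * (γ * x ^ (γ - 1))) x :=
      (hasDerivAt_id x).mul (hr.sub_const _)
    have hm : HasDerivAt (fun t : ℝ => γ * ρ₀ * (t - ρ₀)) (γ * ρ₀ * 1) x :=
      ((hasDerivAt_id x).sub_const ρ₀).const_mul (γ * ρ₀)
    have hmne : γ * ρ₀ * (x - ρ₀) ≠ 0 :=
      mul_ne_zero (mul_ne_zero hγ0' hρ0') (sub_ne_zero.mpr hxρ)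
    have hqd := hn.div hm hmne
    have hgd : HasDerivAt g
        ((( 1 * (x ^ γ - ρ₀ ^ γ) + x * (γ * x ^ (γ - 1))) * (γ * ρ₀ * (x - ρ₀)) -
          x * (x ^ γ - ρ₀ ^ γ) * (γ * ρ₀ * 1)) / (γ * ρ₀ * (x - ρ₀)) ^ 2) x :=
      hqd.congr_of_eventuallyEq ((hgq x hxρ).symm)
    rw [hgd.deriv]
    apply div_pos
    · have hψ := hψpos x hx
      have hnum : (1 * (x ^ γ - ρ₀ ^ γ) + x * (γ * x ^ (γ - 1))) * (γ * ρ₀ * (x - ρ₀)) -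
          x * (x ^ γ - ρ₀ ^ γ) * (γ * ρ₀ * 1) =
          γ * ρ₀ * (γ * (x * x ^ γ) - (γ + 1) * (ρ₀ * x ^ γ) + ρ₀ * ρ₀ ^ γ) := by
        rw [hsplit x (ne_of_gt hx0)]
        ring
      rw [hnum]
      exact mul_pos (mul_pos hγ0 hρ₀) hψ
    · positivity
  have hsub : Set.Ici ρ₀ ⊆ Set.Ioi (0:ℝ) := fun x hx => lt_of_lt_of_le hρ₀ hx
  have hgmono : StrictMonoOn g (Set.Ici ρ₀) :=
    strictMonoOn_of_deriv_pos (convex_Ici ρ₀) (hgcont.mono hsub) hgderiv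
  have hgnonneg : ∀ x ∈ Set.Ici ρ₀, 0 ≤ g x := by
    intro x hx
    by_cases h : x = ρ₀
    · rw [h, hgρval]; positivity
    · rw [hgdef]
      simp only [if_neg h, hqdef]
      have hx0 : (0:ℝ) < x := lt_of_lt_of_le hρ₀ hx
      have hxρ : ρ₀ < x := lt_of_le_of_ne hx (Ne.symm h)
      apply div_nonneg
      · have := Real.rpow_le_rpow (le_of_lt hρ₀) (le_of_lt hxρ) (le_of_lt hγ0)
        nlinarith
      · exact le_of_lt (mul_pos (mul_pos hγ0 hρ₀) (sub_pos.mpr hxρ))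
  refine ⟨hScont, fun ρ _ => by rw [hS]; split <;> exact Real.sqrt_nonneg _, ?_⟩
  intro a ha b hb hab
  rw [hSg a, hSg b]
  exact Real.sqrt_lt_sqrt (hgnonneg a ha) (hgmono ha hb hab)
end
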